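/- Suppose the base graph G contains a K_{2,3} subgraph: there exist vertices u1 ≠ u2 and pairwise distinct vertices w1, w2, w3 such that u_s is adjacent to w_t in G for all s ∈ {1,2} and t ∈ {1,2,3}. Suppose moreover that the voltage assignment takes pairwise commuting values: α u v and α u' v' commute for all u, v, u', v'. Then the permutation derived graph Ĝ has girth at most 12, i.e., Ĝ contains a cycle of length at most 12. -/

import Mathlib

/-!
Write `πₜ = α wₜ u₂ * α u₁ wₜ` for the voltage of the path `u₁ wₜ u₂`. If `πₛ j = πₜ j` for
some `j` and `s ≠ t`, the lifts of `u₁ wₛ u₂` and `u₁ wₜ u₂` starting at `(u₁, j)` form a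
4-cycle. Otherwise lift the closed walk `u₁ w₁ u₂ w₂ u₁ w₃ u₂ w₁ u₁ w₂ u₂ w₃ u₁`: its voltage
`π₃⁻¹ π₂ π₁⁻¹ π₃ π₂⁻¹ π₁` is trivial because the voltages commute, so the lift is closed, and any
two of its vertices in the same fibre differ by some `πₛ πₜ⁻¹` with `s ≠ t`, which has no fixed
point. Hence the lift is a 12-cycle.
-/

def derivedGraph {V : Type*} {n : ℕ} (G : SimpleGraph V)
    (α : V → V → Equiv.Perm (Fin n))
    (hα : ∀ u v, α v u = (α u v)⁻¹) : SimpleGraph (V × Fin n) where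
  Adj p q := G.Adj p.1 q.1 ∧ q.2 = α p.1 q.1 p.2
  symm := by
    constructor
    rintro ⟨u, i⟩ ⟨v, j⟩ ⟨hadj, hj⟩
    simp only at hadj hj ⊢
    subst hj
    exact ⟨hadj.symm, by simp [hα u v]⟩
  loopless := by
    constructor
    rintro ⟨u, i⟩ ⟨hadj, -⟩
    exact (G.ne_of_adj hadj) rfl

open SimpleGraph Function

namespace SimpleGraph

variable {W : Type*} {H : SimpleGraph W}

theorem girth_le_of_injective_of_adj_add_one {m : ℕ} (f : Fin (m + 3) → W) (hf : Injective f)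
    (hadj : ∀ k, H.Adj (f k) (f (k + 1))) : H.girth ≤ m + 3 := by
  have hcopy : cycleGraph (m + 3) ⊑ H := by
    refine ⟨⟨⟨f, fun {a b} hab => ?_⟩, hf⟩⟩
    rcases hab with hab | hab
    · rw [sub_eq_iff_eq_add'] at hab
      exact hab ▸ (hadj b).symm
    · rw [sub_eq_iff_eq_add'] at hab
      exact hab ▸ hadj a
  obtain ⟨_, p, hp, hlen⟩ := (cycleGraph_isContained_iff (by omega)).mp hcopy
  exact hlen ▸ girth_le_length hp

theorem girth_le_four_of_adj {a b c d : W} (hab : H.Adj a b) (hbc : H.Adj b c) (hcd : H.Adj c d)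
    (hda : H.Adj d a) (hac : a ≠ c) (hbd : b ≠ d) : H.girth ≤ 4 := by
  refine girth_le_of_injective_of_adj_add_one ![a, b, c, d] ?_ ?_
  · simp [← List.nodup_ofFn, hab.ne, hbc.ne, hcd.ne, hda.ne', hac, hbd]
  · intro k
    fin_cases k
    exacts [hab, hbc, hcd, hda]

end SimpleGraph

theorem vadd_ne_vadd_of_sub_eq {Γ X : Type*} [AddGroup Γ] [AddAction Γ X] {a b γ δ : Γ}
    (h : ∀ y : X, a +ᵥ y ≠ b +ᵥ y) (e : γ - δ = a - b) (x : X) : γ +ᵥ x ≠ δ +ᵥ x := by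
  intro hx
  apply h (-b +ᵥ δ +ᵥ x)
  rw [vadd_neg_vadd, vadd_vadd, vadd_vadd, ← sub_eq_add_neg, ← e, sub_add_cancel, hx]

open scoped IsMulCommutative in
/-- Abelian voltages are written additively, so that `abel` normalises them. -/
theorem exists_addCommGroup_of_commute {V : Type*} {n : ℕ} {α : V → V → Equiv.Perm (Fin n)}
    (hα : ∀ u v, α v u = (α u v)⁻¹) (hcomm : ∀ u v u' v', Commute (α u v) (α u' v')) :
    ∃ (Γ : Type) (_ : AddCommGroup Γ) (_ : AddAction Γ (Fin n)) (β : V → V → Γ),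
      (∀ u v i, α u v i = β u v +ᵥ i) ∧ ∀ u v, β v u = -β u v := by
  set H := Subgroup.closure (Set.range (uncurry α))
  have : IsMulCommutative H := Subgroup.isMulCommutative_closure (by
    rintro _ ⟨⟨u, v⟩, rfl⟩ _ ⟨⟨u', v'⟩, rfl⟩
    exact hcomm u v u' v')
  let β (u v : V) : H := ⟨α u v, Subgroup.subset_closure ⟨(u, v), rfl⟩⟩
  exact ⟨Additive H, inferInstance, inferInstance, fun u v => Additive.ofMul (β u v),
    fun _ _ _ => rfl, fun u v => congrArg Additive.ofMul (Subtype.ext (hα u v))⟩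

section derivedGraph

variable {V : Type*} {n : ℕ} {G : SimpleGraph V} {α : V → V → Equiv.Perm (Fin n)}
  {hα : ∀ u v, α v u = (α u v)⁻¹}

@[simp]
theorem derivedGraph_adj {p q : V × Fin n} :
    (derivedGraph G α hα).Adj p q ↔ G.Adj p.1 q.1 ∧ q.2 = α p.1 q.1 p.2 :=
  Iff.rfl

theorem derivedGraph_girth_le_four {x y p q : V} (hxy : x ≠ y) (hpq : p ≠ q)
    (hxp : G.Adj x p) (hxq : G.Adj x q) (hpy : G.Adj p y) (hqy : G.Adj q y) {j : Fin n}
    (hj : α p y (α x p j) = α q y (α x q j)) : (derivedGraph G α hα).girth ≤ 4 := by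
  refine girth_le_four_of_adj (a := (x, j)) (b := (p, α x p j)) (c := (y, α p y (α x p j)))
    (d := (q, α x q j)) ⟨hxp, rfl⟩ ⟨hpy, rfl⟩ ⟨hqy.symm, ?_⟩ ⟨hxq.symm, ?_⟩ (by simp [hxy])
    (by simp [hpq])
  · simp [hj, hα q y]
  · simp [hα x q]

theorem derivedGraph_girth_le_twelve {Γ : Type*} [AddCommGroup Γ] [AddAction Γ (Fin n)]
    (β : V → V → Γ) (hβ : ∀ u v i, α u v i = β u v +ᵥ i) (hβneg : ∀ u v, β v u = -β u v)
    {u₁ u₂ w₁ w₂ w₃ : V} (hu : u₁ ≠ u₂) (hw₁₂ : w₁ ≠ w₂) (hw₁₃ : w₁ ≠ w₃) (hw₂₃ : w₂ ≠ w₃)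
    (h₁₁ : G.Adj u₁ w₁) (h₁₂ : G.Adj u₁ w₂) (h₁₃ : G.Adj u₁ w₃)
    (h₂₁ : G.Adj u₂ w₁) (h₂₂ : G.Adj u₂ w₂) (h₂₃ : G.Adj u₂ w₃)
    (hne₁₂ : ∀ j, α w₁ u₂ (α u₁ w₁ j) ≠ α w₂ u₂ (α u₁ w₂ j))
    (hne₁₃ : ∀ j, α w₁ u₂ (α u₁ w₁ j) ≠ α w₃ u₂ (α u₁ w₃ j))
    (hne₂₃ : ∀ j, α w₂ u₂ (α u₁ w₂ j) ≠ α w₃ u₂ (α u₁ w₃ j)) (i : Fin n) :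
    (derivedGraph G α hα).girth ≤ 12 := by
  let π (w : V) : Γ := β u₁ w - β u₂ w
  have hπ : ∀ {s t}, (∀ j, α s u₂ (α u₁ s j) ≠ α t u₂ (α u₁ t j)) →
      ∀ j, π s +ᵥ j ≠ π t +ᵥ j := fun h j => by
    simpa [hβ, hβneg u₂, π, vadd_vadd, sub_eq_neg_add] using h j
  let f : Fin 12 → V × Fin n := ![(u₁, i), (w₁, β u₁ w₁ +ᵥ i), (u₂, π w₁ +ᵥ i),
    (w₂, (β u₂ w₂ + π w₁) +ᵥ i), (u₁, (π w₁ - π w₂) +ᵥ i), (w₃, (β u₁ w₃ + π w₁ - π w₂) +ᵥ i),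
    (u₂, (π w₁ - π w₂ + π w₃) +ᵥ i), (w₁, (β u₁ w₁ - π w₂ + π w₃) +ᵥ i),
    (u₁, (π w₃ - π w₂) +ᵥ i), (w₂, (β u₁ w₂ - π w₂ + π w₃) +ᵥ i), (u₂, π w₃ +ᵥ i),
    (w₃, β u₁ w₃ +ᵥ i)]
  refine girth_le_of_injective_of_adj_add_one f ?_ ?_
  · simp [← List.nodup_ofFn, f, hu, hu.symm, hw₁₂, hw₁₂.symm, hw₁₃, hw₁₃.symm, hw₂₃, hw₂₃.symm,
      h₁₁.ne, h₁₂.ne, h₁₃.ne, h₂₁.ne, h₂₂.ne, h₂₃.ne, h₁₁.ne', h₁₂.ne', h₁₃.ne', h₂₁.ne',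
      h₂₂.ne', h₂₃.ne']
    refine ⟨⟨?_, ?_⟩, ?_, ⟨?_, ?_⟩, ?_, ?_, ?_, ?_⟩
    · simpa using vadd_ne_vadd_of_sub_eq (fun y => (hπ hne₁₂ y).symm) (γ := 0) (by abel) i
    · simpa using vadd_ne_vadd_of_sub_eq (hπ hne₂₃) (γ := 0) (by abel) i
    · exact vadd_ne_vadd_of_sub_eq (hπ hne₂₃) (by abel) i
    · exact vadd_ne_vadd_of_sub_eq (hπ hne₂₃) (by abel) i
    · exact vadd_ne_vadd_of_sub_eq (hπ hne₁₃) (by abel) i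
    · exact vadd_ne_vadd_of_sub_eq (hπ hne₁₃) (by simp only [π]; abel) i
    · exact vadd_ne_vadd_of_sub_eq (hπ hne₁₃) (by abel) i
    · exact vadd_ne_vadd_of_sub_eq (hπ hne₁₂) (by abel) i
    · exact vadd_ne_vadd_of_sub_eq (hπ hne₁₂) (by abel) i
  · intro k
    fin_cases k <;> simp [f, hβ, hβneg u₁, hβneg u₂, vadd_vadd, h₁₁, h₁₂, h₁₃, h₂₁, h₂₂, h₂₃,
      h₁₁.symm, h₁₂.symm, h₁₃.symm, h₂₁.symm, h₂₂.symm, h₂₃.symm]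
    all_goals exact congrArg (· +ᵥ i) (by simp only [π]; abel)

end derivedGraph

/-- If the base graph contains a K_{2,3} subgraph (vertices u1 ≠ u2 and
pairwise distinct w1, w2, w3 with all u_s adjacent to all w_t), and the voltage assignment
takes pairwise commuting values, then the permutation derived graph has girth at most 12,
i.e. it contains a cycle of length at most 12. -/
theorem stmt_10 {V : Type*} {n : ℕ} (hn : 1 ≤ n) (G : SimpleGraph V)
    (α : V → V → Equiv.Perm (Fin n)) (hα : ∀ u v, α v u = (α u v)⁻¹)
    (u1 u2 w1 w2 w3 : V) (hu : u1 ≠ u2)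
    (hw12 : w1 ≠ w2) (hw13 : w1 ≠ w3) (hw23 : w2 ≠ w3)
    (hadj : ∀ s ∈ ({u1, u2} : Set V), ∀ t ∈ ({w1, w2, w3} : Set V), G.Adj s t)
    (hcomm : ∀ u v u' v', Commute (α u v) (α u' v')) :
    (derivedGraph G α hα).girth ≤ 12 := by
  have h₁₁ := hadj u1 (by simp) w1 (by simp)
  have h₁₂ := hadj u1 (by simp) w2 (by simp)
  have h₁₃ := hadj u1 (by simp) w3 (by simp)
  have h₂₁ := hadj u2 (by simp) w1 (by simp)
  have h₂₂ := hadj u2 (by simp) w2 (by simp)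
  have h₂₃ := hadj u2 (by simp) w3 (by simp)
  by_cases hfix₁₂ : ∃ j, α w1 u2 (α u1 w1 j) = α w2 u2 (α u1 w2 j)
  · obtain ⟨j, hj⟩ := hfix₁₂
    exact (derivedGraph_girth_le_four hu hw12 h₁₁ h₁₂ h₂₁.symm h₂₂.symm hj).trans (by norm_num)
  by_cases hfix₁₃ : ∃ j, α w1 u2 (α u1 w1 j) = α w3 u2 (α u1 w3 j)
  · obtain ⟨j, hj⟩ := hfix₁₃
    exact (derivedGraph_girth_le_four hu hw13 h₁₁ h₁₃ h₂₁.symm h₂₃.symm hj).trans (by norm_num)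
  by_cases hfix₂₃ : ∃ j, α w2 u2 (α u1 w2 j) = α w3 u2 (α u1 w3 j)
  · obtain ⟨j, hj⟩ := hfix₂₃
    exact (derivedGraph_girth_le_four hu hw23 h₁₂ h₁₃ h₂₂.symm h₂₃.symm hj).trans (by norm_num)
  push Not at hfix₁₂ hfix₁₃ hfix₂₃
  obtain ⟨Γ, _, _, β, hβ, hβneg⟩ := exists_addCommGroup_of_commute hα hcomm
  exact derivedGraph_girth_le_twelve β hβ hβneg hu hw12 hw13 hw23 h₁₁ h₁₂ h₁₃ h₂₁ h₂₂ h₂₃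
    hfix₁₂ hfix₁₃ hfix₂₃ ⟨0, hn⟩
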